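/- Let F be algebraically closed and suppose r is a solution of the classical Yang–Baxter equation on L with r + τ(r) L-invariant, and let λ ∈ F be nonzero. If R and R* are both Rota–Baxter operators of weight λ, then L decomposes as a direct sum of two Lie ideals L = I_1 ⊕ I_2 such that R(a) + R*(a) + λa ∈ Z(L) for all a ∈ I_1, and R([x, y]) = R*([x, y]) = 0 for all x ∈ I_2 and y ∈ L. -/

import Mathlib

/-!
Contracting the invariance of `r + τ(r)` against `ω` shows that `T = R + R* + λ·id` commutes with
every `ad y`, and contracting the CYBE turns the Rota–Baxter identities of `R` and `R*` into
`R⁅L, T L⁆ = R*⁅L, T L⁆ = 0`. On `N = ker R ∩ ker R*` the map `T` is `λ·id`, so every `x` splits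
as `(x - λ⁻¹Tx) + λ⁻¹Tx` with `T(x - λ⁻¹Tx)` central and `⁅L, λ⁻¹Tx⁆ ⊆ N`. Thus `L = K + P` for
`K = T⁻¹(Z(L))` and `P = {x | ⁅L, x⁆ ⊆ N}`, where `⁅L, K⁆ ⊆ ker T ⊆ K`, `⁅L, P⁆ ⊆ N ⊆ P` and
`ker T ∩ N = 0`; complementing `ker T` inside `K` and `N` inside `P` compatibly gives the ideals.
-/

open TensorProduct

theorem exists_le_disjoint_sup_eq {α : Type*} [Lattice α] [BoundedOrder α] [IsModularLattice α]
    [ComplementedLattice α] {A M P : α} (hA : A ≤ P) (hM : M ≤ P) (hAM : Disjoint A M) :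
    ∃ B, M ≤ B ∧ B ≤ P ∧ Disjoint A B ∧ A ⊔ B = P := by
  obtain ⟨C, hC⟩ := exists_isCompl (A ⊔ M)
  refine ⟨M ⊔ C ⊓ P, le_sup_left, sup_le hM inf_le_right,
    hAM.disjoint_sup_right_of_disjoint_sup_left (hC.disjoint.mono_right inf_le_left), ?_⟩
  rw [← sup_assoc, ← sup_inf_assoc_of_le C (sup_le hA hM), hC.sup_eq_top, top_inf_eq]

theorem exists_isCompl_of_le_of_le {α : Type*} [Lattice α] [BoundedOrder α] [IsModularLattice α]
    [ComplementedLattice α] {J K M P : α} (hJK : J ≤ K) (hMP : M ≤ P) (hJM : Disjoint J M)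
    (hKP : K ⊔ P = ⊤) :
    ∃ I₁ I₂, J ≤ I₁ ∧ I₁ ≤ K ∧ M ≤ I₂ ∧ I₂ ≤ P ∧ IsCompl I₁ I₂ := by
  obtain ⟨I₁, hJI₁, hI₁K, hdisj₁, hsup₁⟩ :=
    exists_le_disjoint_sup_eq (inf_le_right : M ⊓ K ≤ K) hJK (hJM.symm.mono_left inf_le_left)
  have hI₁M : Disjoint I₁ M := by
    rw [disjoint_iff, ← inf_eq_left.mpr hI₁K, inf_assoc, inf_comm K]
    exact hdisj₁.symm.eq_bot
  have hI₁P : I₁ ⊔ P = ⊤ := by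
    rw [eq_top_iff, ← hKP, ← hsup₁]
    exact sup_le (sup_le (inf_le_left.trans (hMP.trans le_sup_right)) le_sup_left) le_sup_right
  obtain ⟨I₂, hMI₂, hI₂P, hdisj₂, hsup₂⟩ :=
    exists_le_disjoint_sup_eq (inf_le_right : I₁ ⊓ P ≤ P) hMP (hI₁M.mono_left inf_le_left)
  refine ⟨I₁, I₂, hJI₁, hI₁K, hMI₂, hI₂P, ⟨?_, ?_⟩⟩
  · rw [disjoint_iff, ← inf_eq_right.mpr hI₂P, ← inf_assoc]
    exact hdisj₂.eq_bot
  · rw [codisjoint_iff, ← hI₁P, ← hsup₂, ← sup_assoc, sup_inf_self]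

namespace LieIdeal

variable {F L : Type*} [Field F] [LieRing L] [LieAlgebra F L]

theorem exists_isCompl_of_lie_mem {J K M P : Submodule F L} (hJK : J ≤ K) (hMP : M ≤ P)
    (hJM : Disjoint J M) (hKP : K ⊔ P = ⊤) (hK : ∀ x ∈ K, ∀ y : L, ⁅y, x⁆ ∈ J)
    (hP : ∀ x ∈ P, ∀ y : L, ⁅y, x⁆ ∈ M) :
    ∃ I₁ I₂ : LieIdeal F L, IsCompl I₁ I₂ ∧ I₁.toSubmodule ≤ K ∧ I₂.toSubmodule ≤ P := by
  obtain ⟨I₁, I₂, hJI₁, hI₁K, hMI₂, hI₂P, hI⟩ := exists_isCompl_of_le_of_le hJK hMP hJM hKP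
  let I₁' : LieIdeal F L := { I₁ with lie_mem := fun {y x} hx => hJI₁ (hK x (hI₁K hx) y) }
  let I₂' : LieIdeal F L := { I₂ with lie_mem := fun {y x} hx => hMI₂ (hP x (hI₂P hx) y) }
  exact ⟨I₁', I₂', LieSubmodule.isCompl_toSubmodule.mp hI, hI₁K, hI₂P⟩

theorem exists_isCompl_of_centroid (T : L →ₗ[F] L) {lam : F} (hlam : lam ≠ 0)
    (N : Submodule F L) (hT : ∀ y z : L, T ⁅y, z⁆ = ⁅y, T z⁆) (hTN : ∀ y z : L, ⁅y, T z⁆ ∈ N)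
    (hN : ∀ x ∈ N, T x = lam • x) :
    ∃ I₁ I₂ : LieIdeal F L, IsCompl I₁ I₂ ∧
      (∀ x ∈ I₁, T x ∈ LieAlgebra.center F L) ∧ (∀ x ∈ I₂, ∀ y : L, ⁅y, x⁆ ∈ N) := by
  let K := (LieAlgebra.center F L).toSubmodule.comap T
  let P := ⨅ y : L, N.comap (LieAlgebra.ad F L y)
  have mem_K : ∀ x, x ∈ K ↔ ∀ y : L, ⁅y, T x⁆ = 0 := fun x =>
    LieModule.mem_maxTrivSubmodule F L L _
  have mem_P : ∀ x, x ∈ P ↔ ∀ y : L, ⁅y, x⁆ ∈ N := by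
    simp [P]
  have hNP : N ≤ P := fun x hx => by
    rw [mem_P]
    intro y
    rw [← inv_smul_smul₀ hlam x, ← hN x hx, lie_smul]
    exact N.smul_mem _ (hTN y x)
  have hKP : K ⊔ P = ⊤ := by
    refine eq_top_iff.2 fun x _ => ?_
    rw [← sub_add_cancel x (lam⁻¹ • T x)]
    refine Submodule.add_mem_sup ((mem_K _).2 fun y => ?_)
      (P.smul_mem _ ((mem_P _).2 fun y => hTN y x))
    rw [map_sub, map_smul, lie_sub, lie_smul, ← hT y (T x), hN _ (hTN y x), inv_smul_smul₀ hlam,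
      sub_self]
  have hJK : LinearMap.ker T ≤ K := fun x hx =>
    (mem_K x).2 fun y => by rw [LinearMap.mem_ker.1 hx, lie_zero]
  have hJN : Disjoint (LinearMap.ker T) N := Submodule.disjoint_def.2 fun x hJ hN' => by
    rw [LinearMap.mem_ker, hN x hN'] at hJ
    exact (smul_eq_zero.1 hJ).resolve_left hlam
  have hKJ : ∀ x ∈ K, ∀ y : L, ⁅y, x⁆ ∈ LinearMap.ker T := fun x hx y => by
    rw [LinearMap.mem_ker, hT, (mem_K x).1 hx]
  obtain ⟨I₁, I₂, hI, hI₁K, hI₂P⟩ :=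
    exists_isCompl_of_lie_mem hJK hNP hJN hKP hKJ fun x hx => (mem_P x).1 hx
  exact ⟨I₁, I₂, hI, fun x hx => hI₁K hx, fun x hx => (mem_P x).1 (hI₂P hx)⟩

end LieIdeal

section TensorContraction

variable {F L ι : Type*} [CommRing F] [LieRing L] [LieAlgebra F L] [Fintype ι]
  {ω : LinearMap.BilinForm F L} {a b : ι → L} {R Rstar : L →ₗ[F] L}

theorem bilin_apply_lie_eq_lie_apply (hinv : ∀ x y z : L, ω ⁅x, y⁆ z = ω x ⁅y, z⁆) (u x y : L) :
    ω u ⁅y, x⁆ = ω ⁅x, u⁆ y := by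
  rw [← lie_skew, map_neg, ← hinv, ← lie_skew, map_neg, LinearMap.neg_apply, neg_neg]

theorem adjoint_apply_eq_sum (hsep : ω.SeparatingRight) (hsymm : ∀ x y : L, ω x y = ω y x)
    (hR : ∀ x : L, R x = ∑ i, ω (b i) x • a i) (hadj : ∀ x y : L, ω (R x) y = ω x (Rstar y))
    (x : L) : Rstar x = ∑ i, ω (a i) x • b i := by
  refine sub_eq_zero.1 (hsep _ fun u => ?_)
  simp only [map_sub, ← hadj, hR u, map_sum, map_smul, LinearMap.sum_apply, LinearMap.smul_apply,
    smul_eq_mul, hsymm u (b _), mul_comm, sub_self]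

theorem map_lie_add_map_lie_eq_lie_add (hinv : ∀ x y z : L, ω ⁅x, y⁆ z = ω x ⁅y, z⁆)
    (hR : ∀ x : L, R x = ∑ i, ω (b i) x • a i) (hRs : ∀ x : L, Rstar x = ∑ i, ω (a i) x • b i)
    (hinvr : ∀ y : L, ∑ i, (⁅a i, y⁆ ⊗ₜ[F] b i + a i ⊗ₜ[F] ⁅b i, y⁆
        + ⁅b i, y⁆ ⊗ₜ[F] a i + b i ⊗ₜ[F] ⁅a i, y⁆) = (0 : L ⊗[F] L)) (y z : L) :
    R ⁅y, z⁆ + Rstar ⁅y, z⁆ = ⁅y, R z + Rstar z⁆ := by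
  have h := congrArg ((TensorProduct.rid F L).toLinearMap ∘ₗ (ω.flip z).lTensor L) (hinvr y)
  simp only [map_sum, map_add, LinearMap.comp_apply, LinearMap.lTensor_tmul,
    LinearMap.BilinForm.flip_apply, LinearEquiv.coe_coe, TensorProduct.rid_tmul, map_zero,
    Finset.sum_add_distrib, hinv] at h
  rw [← lie_skew y (R z + Rstar z), hR, hRs, hR, hRs, add_lie, sum_lie, sum_lie]
  simp only [smul_lie]
  linear_combination (norm := module) h

theorem lie_map_map_eq_of_cybe (hinv : ∀ x y z : L, ω ⁅x, y⁆ z = ω x ⁅y, z⁆)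
    (hR : ∀ x : L, R x = ∑ i, ω (b i) x • a i) (hRs : ∀ x : L, Rstar x = ∑ i, ω (a i) x • b i)
    (hCYBE : ∑ i, ∑ j, (⁅a i, a j⁆ ⊗ₜ[F] (b i ⊗ₜ[F] b j)
        - a i ⊗ₜ[F] (⁅a j, b i⁆ ⊗ₜ[F] b j)
        + a i ⊗ₜ[F] (a j ⊗ₜ[F] ⁅b i, b j⁆)) = (0 : L ⊗[F] (L ⊗[F] L)))
    (y z : L) : ⁅R y, R z⁆ = R ⁅y, R z⁆ - R ⁅Rstar y, z⁆ := by
  have h := congrArg ((TensorProduct.rid F L).toLinearMap ∘ₗ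
    (TensorProduct.lid F F ∘ₗ TensorProduct.map (ω.flip y) (ω.flip z)).lTensor L) hCYBE
  simp only [map_sum, map_add, map_sub, LinearMap.comp_apply, LinearMap.lTensor_tmul,
    TensorProduct.map_tmul, LinearMap.BilinForm.flip_apply, LinearEquiv.coe_coe,
    TensorProduct.rid_tmul, TensorProduct.lid_tmul, smul_eq_mul, map_zero,
    Finset.sum_add_distrib, Finset.sum_sub_distrib] at h
  have e₁ : ⁅R y, R z⁆ = ∑ i, ∑ j, (ω (b i) y * ω (b j) z) • ⁅a i, a j⁆ := by
    simp only [hR, sum_lie_sum, smul_lie, lie_smul, smul_smul, mul_comm]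
  have e₂ : R ⁅y, R z⁆ = ∑ i, ∑ j, (ω ⁅a j, b i⁆ y * ω (b j) z) • a i := by
    simp only [hR ⁅y, R z⁆, bilin_apply_lie_eq_lie_apply hinv, ← Finset.sum_smul]
    simp only [hR z, sum_lie, smul_lie, map_sum, map_smul, LinearMap.sum_apply,
      LinearMap.smul_apply, smul_eq_mul, mul_comm]
  have e₃ : R ⁅Rstar y, z⁆ = ∑ i, ∑ j, (ω (a j) y * ω ⁅b i, b j⁆ z) • a i := by
    simp only [hR ⁅Rstar y, z⁆, hinv, ← Finset.sum_smul]
    simp only [hRs y, sum_lie, smul_lie, map_sum, map_smul, smul_eq_mul]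
  rw [e₁, e₂, e₃]
  linear_combination (norm := module) h

theorem lie_adjoint_adjoint_eq_of_cybe (hinv : ∀ x y z : L, ω ⁅x, y⁆ z = ω x ⁅y, z⁆)
    (hR : ∀ x : L, R x = ∑ i, ω (b i) x • a i) (hRs : ∀ x : L, Rstar x = ∑ i, ω (a i) x • b i)
    (hCYBE : ∑ i, ∑ j, (⁅a i, a j⁆ ⊗ₜ[F] (b i ⊗ₜ[F] b j)
        - a i ⊗ₜ[F] (⁅a j, b i⁆ ⊗ₜ[F] b j)
        + a i ⊗ₜ[F] (a j ⊗ₜ[F] ⁅b i, b j⁆)) = (0 : L ⊗[F] (L ⊗[F] L)))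
    (y z : L) :
    ⁅Rstar y, Rstar z⁆ = Rstar ⁅y, Rstar z⁆ - Rstar ⁅R y, z⁆ := by
  -- Contracting the first two factors against `ω(·, z)` and `ω(·, y)` yields the identity with
  -- `y` and `z` exchanged, whence the skew-symmetry rewrites at the end.
  have h := congrArg ((TensorProduct.lid F L).toLinearMap ∘ₗ
    TensorProduct.map (ω.flip z) ((TensorProduct.lid F L).toLinearMap ∘ₗ (ω.flip y).rTensor L))
    hCYBE
  simp only [map_sum, map_add, map_sub, LinearMap.comp_apply, LinearMap.rTensor_tmul,
    TensorProduct.map_tmul, LinearMap.BilinForm.flip_apply, LinearEquiv.coe_coe,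
    TensorProduct.lid_tmul, smul_smul, map_zero, Finset.sum_add_distrib,
    Finset.sum_sub_distrib] at h
  have e₁ : Rstar ⁅z, R y⁆ = ∑ i, ∑ j, (ω ⁅a i, a j⁆ z * ω (b i) y) • b j := by
    rw [Finset.sum_comm]
    simp only [hRs ⁅z, R y⁆, bilin_apply_lie_eq_lie_apply hinv, ← Finset.sum_smul]
    simp only [hR y, sum_lie, smul_lie, map_sum, map_smul, LinearMap.sum_apply,
      LinearMap.smul_apply, smul_eq_mul, mul_comm]
  have e₂ : Rstar ⁅Rstar z, y⁆ = ∑ i, ∑ j, (ω (a i) z * ω ⁅a j, b i⁆ y) • b j := by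
    rw [Finset.sum_comm]
    simp only [hRs ⁅Rstar z, y⁆, ← hinv, ← Finset.sum_smul]
    simp only [hRs z, lie_sum, lie_smul, map_sum, map_smul, LinearMap.sum_apply,
      LinearMap.smul_apply, smul_eq_mul]
  have e₃ : ⁅Rstar z, Rstar y⁆ = ∑ i, ∑ j, (ω (a i) z * ω (a j) y) • ⁅b i, b j⁆ := by
    simp only [hRs, sum_lie_sum, smul_lie, lie_smul, smul_smul, mul_comm]
  rw [← lie_skew (Rstar y), ← lie_skew y, ← lie_skew (R y), map_neg, map_neg, e₁, e₂, e₃]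
  linear_combination (norm := module) -h

end TensorContraction

theorem map_lie_add_eq_zero_of_rotaBaxter {F L : Type*} [CommRing F] [LieRing L]
    [LieAlgebra F L] {R S : L →ₗ[F] L} {lam : F}
    (hRB : ∀ x y : L, ⁅R x, R y⁆ = R (⁅R x, y⁆ + ⁅x, R y⁆ + lam • ⁅x, y⁆))
    (h : ∀ y z : L, ⁅R y, R z⁆ = R ⁅y, R z⁆ - R ⁅S y, z⁆) (y z : L) :
    R ⁅z, R y + S y + lam • y⁆ = 0 := by
  have hRB' := hRB y z
  rw [map_add, map_add, map_smul] at hRB'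
  rw [← lie_skew, map_neg, add_lie, add_lie, smul_lie, map_add, map_add, map_smul]
  linear_combination (norm := module) hRB' - h y z

theorem stmt_16_general
    (F : Type*) [Field F]
    (L : Type*) [LieRing L] [LieAlgebra F L]
    (ω : LinearMap.BilinForm F L)
    (hnd : ω.Nondegenerate)
    (hsymm : ∀ x y : L, ω x y = ω y x)
    (hinv : ∀ x y z : L, ω ⁅x, y⁆ z = ω x ⁅y, z⁆)
    (ι : Type*) [Fintype ι] (a b : ι → L)
    (R Rstar : L →ₗ[F] L)
    (hR : ∀ x : L, R x = ∑ i, ω (b i) x • a i)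
    (hadj : ∀ x y : L, ω (R x) y = ω x (Rstar y))
    (hCYBE : ∑ i, ∑ j, (⁅a i, a j⁆ ⊗ₜ[F] (b i ⊗ₜ[F] b j)
        - a i ⊗ₜ[F] (⁅a j, b i⁆ ⊗ₜ[F] b j)
        + a i ⊗ₜ[F] (a j ⊗ₜ[F] ⁅b i, b j⁆)) = (0 : L ⊗[F] (L ⊗[F] L)))
    (hinvr : ∀ y : L, ∑ i, (⁅a i, y⁆ ⊗ₜ[F] b i + a i ⊗ₜ[F] ⁅b i, y⁆
        + ⁅b i, y⁆ ⊗ₜ[F] a i + b i ⊗ₜ[F] ⁅a i, y⁆) = (0 : L ⊗[F] L))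
    (lam : F) (hlam : lam ≠ 0)
    (hRB : ∀ x y : L, ⁅R x, R y⁆ = R (⁅R x, y⁆ + ⁅x, R y⁆ + lam • ⁅x, y⁆))
    (hRBs : ∀ x y : L, ⁅Rstar x, Rstar y⁆ = Rstar (⁅Rstar x, y⁆ + ⁅x, Rstar y⁆ + lam • ⁅x, y⁆)) :
    ∃ I₁ I₂ : LieIdeal F L,
      I₁ ⊔ I₂ = ⊤ ∧
      I₁ ⊓ I₂ = ⊥ ∧
      (∀ x ∈ I₁, R x + Rstar x + lam • x ∈ LieAlgebra.center F L) ∧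
      (∀ x ∈ I₂, ∀ y : L, R ⁅x, y⁆ = 0 ∧ Rstar ⁅x, y⁆ = 0) := by
  have hRs := adjoint_apply_eq_sum hnd.2 hsymm hR hadj
  let T : L →ₗ[F] L := R + Rstar + lam • LinearMap.id
  have hT : ∀ x, T x = R x + Rstar x + lam • x := fun _ => rfl
  have hcentroid : ∀ y z : L, T ⁅y, z⁆ = ⁅y, T z⁆ := fun y z => by
    rw [hT, hT, map_lie_add_map_lie_eq_lie_add hinv hR hRs hinvr, lie_add _ (R z + Rstar z),
      lie_smul]
  have hTN : ∀ y z : L, ⁅y, T z⁆ ∈ LinearMap.ker R ⊓ LinearMap.ker Rstar := by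
    intro y z
    constructor
    · exact map_lie_add_eq_zero_of_rotaBaxter hRB (lie_map_map_eq_of_cybe hinv hR hRs hCYBE) z y
    · show Rstar ⁅y, T z⁆ = 0
      rw [hT, add_comm (R z)]
      exact map_lie_add_eq_zero_of_rotaBaxter hRBs
        (lie_adjoint_adjoint_eq_of_cybe hinv hR hRs hCYBE) z y
  obtain ⟨I₁, I₂, hI, h₁, h₂⟩ := LieIdeal.exists_isCompl_of_centroid T hlam _ hcentroid hTN
    fun x hx => by rw [hT, hx.1, hx.2, zero_add, zero_add]
  refine ⟨I₁, I₂, hI.sup_eq_top, hI.inf_eq_bot, h₁, fun x hx y => ?_⟩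
  obtain ⟨hRx, hRsx⟩ := h₂ x hx y
  rw [← lie_skew, map_neg, map_neg, LinearMap.mem_ker.1 hRx, LinearMap.mem_ker.1 hRsx, neg_zero]
  exact ⟨rfl, rfl⟩

theorem stmt_16
    (F : Type*) [Field F] [CharZero F]
    (L : Type*) [LieRing L] [LieAlgebra F L] [FiniteDimensional F L]
    (ω : LinearMap.BilinForm F L)
    (hnd : ω.Nondegenerate)
    (hsymm : ∀ x y : L, ω x y = ω y x)
    (hinv : ∀ x y z : L, ω ⁅x, y⁆ z = ω x ⁅y, z⁆)
    (ι : Type*) [Fintype ι] (a b : ι → L)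
    (R Rstar : L →ₗ[F] L)
    (hR : ∀ x : L, R x = ∑ i, ω (b i) x • a i)
    (hadj : ∀ x y : L, ω (R x) y = ω x (Rstar y))
    [IsAlgClosed F]
    (hCYBE : ∑ i, ∑ j, (⁅a i, a j⁆ ⊗ₜ[F] (b i ⊗ₜ[F] b j)
        - a i ⊗ₜ[F] (⁅a j, b i⁆ ⊗ₜ[F] b j)
        + a i ⊗ₜ[F] (a j ⊗ₜ[F] ⁅b i, b j⁆)) = (0 : L ⊗[F] (L ⊗[F] L)))
    (hinvr : ∀ y : L, ∑ i, (⁅a i, y⁆ ⊗ₜ[F] b i + a i ⊗ₜ[F] ⁅b i, y⁆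
        + ⁅b i, y⁆ ⊗ₜ[F] a i + b i ⊗ₜ[F] ⁅a i, y⁆) = (0 : L ⊗[F] L))
    (lam : F) (hlam : lam ≠ 0)
    (hRB : ∀ x y : L, ⁅R x, R y⁆ = R (⁅R x, y⁆ + ⁅x, R y⁆ + lam • ⁅x, y⁆))
    (hRBs : ∀ x y : L, ⁅Rstar x, Rstar y⁆ = Rstar (⁅Rstar x, y⁆ + ⁅x, Rstar y⁆ + lam • ⁅x, y⁆)) :
    ∃ I₁ I₂ : LieIdeal F L,
      I₁ ⊔ I₂ = ⊤ ∧
      I₁ ⊓ I₂ = ⊥ ∧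
      (∀ x ∈ I₁, R x + Rstar x + lam • x ∈ LieAlgebra.center F L) ∧
      (∀ x ∈ I₂, ∀ y : L, R ⁅x, y⁆ = 0 ∧ Rstar ⁅x, y⁆ = 0) :=
  stmt_16_general F L ω hnd hsymm hinv ι a b R Rstar hR hadj hCYBE hinvr lam hlam hRB hRBs
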